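/- (Splittability of II* into I₂* + I₁ + I₁) There exist matrices C, B₁, B₂ ∈ SL(2,ℤ) with C conjugate in SL(2,ℤ) to A_{I₂*} = -[[1,2],[0,1]] and B₁, B₂ each conjugate to A_{I₁} = [[1,1],[0,1]], such that the product C·B₁·B₂ is conjugate in SL(2,ℤ) to A_{II*} = [[0,-1],[1,1]]. In other words, the fiber type II* admits a monodromy decomposition into I₂* + I₁ + I₁. -/

import Mathlib

/-- The special linear group `SL(2, ℤ)`. -/
abbrev SL2Z := Matrix.SpecialLinearGroup (Fin 2) ℤ

/-- `A` is conjugate to `B` in `SL(2, ℤ)`: there is `P ∈ SL(2,ℤ)` with `P * A * P⁻¹ = B`. -/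
def ConjTo (A B : SL2Z) : Prop := ∃ P : SL2Z, P * A * P⁻¹ = B

/-- The standard monodromy matrix `A_{I_n} = [[1,n],[0,1]]`. -/
def AI (n : ℤ) : SL2Z := ⟨!![1, n; 0, 1], by simp [Matrix.det_fin_two_of]⟩

/-- The standard monodromy matrix `A_{II} = [[1,1],[-1,0]]`. -/
def AII : SL2Z := ⟨!![1, 1; -1, 0], by norm_num [Matrix.det_fin_two_of]⟩

/-- The standard monodromy matrix `A_{III} = [[0,1],[-1,0]]`. -/
def AIII : SL2Z := ⟨!![0, 1; -1, 0], by norm_num [Matrix.det_fin_two_of]⟩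

/-- The standard monodromy matrix `A_{IV} = [[0,1],[-1,-1]]`. -/
def AIV : SL2Z := ⟨!![0, 1; -1, -1], by norm_num [Matrix.det_fin_two_of]⟩

/-- The standard monodromy matrix `A_{I₀*} = -I`. -/
def negI : SL2Z := ⟨!![-1, 0; 0, -1], by norm_num [Matrix.det_fin_two_of]⟩

/-- The standard monodromy matrix `A_{I_n*} = -[[1,n],[0,1]]`. -/
def AIstar (n : ℤ) : SL2Z := ⟨!![-1, -n; 0, -1], by simp [Matrix.det_fin_two_of]⟩

/-- The standard monodromy matrix `A_{IV*} = [[-1,-1],[1,0]]`. -/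
def AIVstar : SL2Z := ⟨!![-1, -1; 1, 0], by norm_num [Matrix.det_fin_two_of]⟩

/-- The standard monodromy matrix `A_{III*} = [[0,-1],[1,0]]`. -/
def AIIIstar : SL2Z := ⟨!![0, -1; 1, 0], by norm_num [Matrix.det_fin_two_of]⟩

/-- The standard monodromy matrix `A_{II*} = [[0,-1],[1,1]]`. -/
def AIIstar : SL2Z := ⟨!![0, -1; 1, 1], by norm_num [Matrix.det_fin_two_of]⟩

/-! With `S = [[0,-1],[1,0]]` and `T = A_{I₁}` we have `A_{II*} = S T`, so taking `C = A_{I₂*} = -T²`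
and `B₂ = T` forces `B₁ = -T⁻² S = [[2,1],[-1,0]]`. This is the transvection `v ↦ v + det(u, v) u`
along the primitive vector `u = (1,-1)`, and every such transvection is conjugate to `T` by any
`P ∈ SL(2,ℤ)` with first column `u`. -/

theorem ConjTo.refl (A : SL2Z) : ConjTo A A :=
  ⟨1, by simp⟩

theorem conjTo_of_mul_eq_mul {A B P : SL2Z} (h : P * A = B * P) : ConjTo A B :=
  ⟨P, by rw [h, mul_inv_cancel_right]⟩

/-- The matrix of `v ↦ v + n • det(u, v) • u` for `u = (a, c)`. -/
def transvection (n a c : ℤ) : SL2Z :=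
  ⟨!![1 - n * a * c, n * a ^ 2; -(n * c ^ 2), 1 + n * a * c], by
    simp only [Matrix.det_fin_two_of]; ring⟩

theorem transvection_conjTo_AI (n : ℤ) {a b c d : ℤ} (hdet : a * d - b * c = 1) :
    ConjTo (transvection n a c) (AI n) := by
  let Q : SL2Z := ⟨!![d, -b; -c, a], by simp only [Matrix.det_fin_two_of]; linear_combination hdet⟩
  refine conjTo_of_mul_eq_mul (P := Q) ?_
  ext i j
  simp only [Matrix.SpecialLinearGroup.coe_mul]
  fin_cases i <;> fin_cases j <;> simp [Q, transvection, AI]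
  · linear_combination (-n * c) * hdet
  · linear_combination (n * a) * hdet
  · ring
  · ring

theorem AIstar_two_mul_transvection_mul_AI_one :
    AIstar 2 * transvection 1 1 (-1) * AI 1 = AIIstar := by
  decide

/-- The fiber type `II*` admits a monodromy decomposition into `I₂* + I₁ + I₁`. -/
theorem IIstar_decomposition_I2star_I1_I1 :
    ∃ C B₁ B₂ : SL2Z, ConjTo C (AIstar 2) ∧ ConjTo B₁ (AI 1) ∧ ConjTo B₂ (AI 1) ∧
      ConjTo (C * B₁ * B₂) AIIstar :=
  ⟨AIstar 2, transvection 1 1 (-1), AI 1, .refl _,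
    transvection_conjTo_AI 1 (b := 0) (d := 1) (by norm_num), .refl _,
    AIstar_two_mul_transvection_mul_AI_one ▸ .refl _⟩
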